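/- Let R be a reduced root system with positive system satisfying property # for a strongly orthogonal set A. Then R⁺_A is the disjoint union over α ∈ A of the sets R⁺_α = {β > 0 : s_α(β) < 0}. -/

import Mathlib

/-! Distinct elements of `A` are orthogonal: `#` rules out `γ = -α`, and otherwise a nonzero
inner product would make `α + γ` or `α - γ` a root. Property `#` then says that each `s_γ`,
`γ ∈ A \ {α}`, maps `R⁺_α` onto itself, hence so does `S_{A \ {α}}`, and `S_A = s_α S_{A \ {α}}`
gives `R⁺_α ⊆ R⁺_A`. Conversely, if `s_α β > 0` for every `α ∈ A`, applying the reflections of `A`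
to `β` one at a time never produces a negative root, since a first sign change at `s_γ` would put
`β` in `R⁺_γ`; so `S_A β > 0`. Disjointness of the `R⁺_α` is `#` itself. -/

open scoped InnerProductSpace

variable {V : Type*} [NormedAddCommGroup V] [InnerProductSpace ℝ V]

/-- The (orthogonal) reflection in the root `α`: `s_α(v) = v - (2⟪v,α⟫/⟪α,α⟫)α`. -/
noncomputable def sRefl (α v : V) : V := v - (2 * ⟪v, α⟫_ℝ / ⟪α, α⟫_ℝ) • α

/-- The coroot of `α`, identified with a vector via the invariant inner product. -/
noncomputable def coroot (α : V) : V := (2 / ⟪α, α⟫_ℝ) • α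

/-- `S_A`: the product of the (commuting) reflections in the pairwise orthogonal
elements of `A`, given by its closed formula. -/
noncomputable def SRefl (A : Finset V) (v : V) : V :=
  v - ∑ α ∈ A, (2 * ⟪v, α⟫_ℝ / ⟪α, α⟫_ℝ) • α

/-- A (reduced) root system in `V`, with the ambient inner product Weyl-invariant. -/
structure IsRootSystem (R : Set V) : Prop where
  finite : R.Finite
  nonempty : R.Nonempty
  ne_zero : ∀ α ∈ R, α ≠ (0 : V)
  refl_mem : ∀ α ∈ R, ∀ β ∈ R, sRefl α β ∈ R
  integral : ∀ α ∈ R, ∀ β ∈ R, ∃ n : ℤ, 2 * ⟪β, α⟫_ℝ / ⟪α, α⟫_ℝ = (n : ℝ)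
  reduced : ∀ α ∈ R, ∀ t : ℝ, t • α ∈ R → t = 1 ∨ t = -1

/-- `α` and `β` are strongly orthogonal: neither their sum nor difference is a root. -/
def StronglyOrthogonal (R : Set V) (α β : V) : Prop := α + β ∉ R ∧ α - β ∉ R

/-- A strongly orthogonal subset of `R`. -/
def IsSOS (R A : Set V) : Prop := A ⊆ R ∧ A.Pairwise (StronglyOrthogonal R)

/-- A choice of positive roots in `R`. -/
structure IsPositiveSystem (R P : Set V) : Prop where
  subset : P ⊆ R
  mem_or_neg_mem : ∀ α ∈ R, α ∈ P ∨ -α ∈ P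
  not_both : ∀ α ∈ P, -α ∉ P
  add_mem : ∀ α ∈ P, ∀ β ∈ P, α + β ∈ R → α + β ∈ P

/-- Property `#(R,>,A)`: for distinct `α₁, α₂ ∈ A` and `β > 0`,
`s_{α₁}(β) < 0` implies `s_{α₂}(β) > 0`. -/
def PropSharp (P A : Set V) : Prop :=
  ∀ α₁ ∈ A, ∀ α₂ ∈ A, α₁ ≠ α₂ → ∀ β ∈ P, -(sRefl α₁ β) ∈ P → sRefl α₂ β ∈ P

/-- Property `##(R,>,A)`: for disjoint `A₁, A₂ ⊆ A` and `β > 0` with `S_{A₁}(β) < 0`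
one has `S_{A₂}(β) > 0` and `S_{A₁}S_{A₂}(β) < 0`. -/
def PropSharpSharp (P : Set V) (A : Finset V) : Prop :=
  ∀ A₁ ⊆ A, ∀ A₂ ⊆ A, Disjoint A₁ A₂ → ∀ β ∈ P, -(SRefl A₁ β) ∈ P →
    SRefl A₂ β ∈ P ∧ -(SRefl A₁ (SRefl A₂ β)) ∈ P

/-- `R⁺_B = {β : β > 0 ∧ S_B(β) < 0}`. -/
noncomputable def RPlus (P : Set V) (B : Finset V) : Set V :=
  {β | β ∈ P ∧ -(SRefl B β) ∈ P}

lemma sRefl_neg_right (α v : V) : sRefl α (-v) = -sRefl α v := by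
  simp only [sRefl, inner_neg_left]
  match_scalars <;> ring

lemma sRefl_neg_left (α v : V) : sRefl (-α) v = sRefl α v := by
  simp only [sRefl, inner_neg_right, inner_neg_left, neg_neg]
  match_scalars <;> ring

lemma sRefl_self (α : V) : sRefl α α = -α := by
  rcases eq_or_ne α 0 with rfl | hα
  · simp [sRefl]
  · rw [sRefl, mul_div_assoc, div_self (inner_self_ne_zero.mpr hα)]
    match_scalars
    ring

lemma sRefl_involutive (α : V) : Function.Involutive (sRefl α) := by
  intro v
  rcases eq_or_ne α 0 with rfl | hα
  · simp [sRefl]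
  · have hαα : ⟪α, α⟫_ℝ ≠ 0 := inner_self_ne_zero.mpr hα
    simp only [sRefl, inner_sub_left, real_inner_smul_left]
    match_scalars
    · ring
    · field_simp
      ring

lemma sRefl_comm {α γ : V} (h : ⟪α, γ⟫_ℝ = 0) (v : V) :
    sRefl α (sRefl γ v) = sRefl γ (sRefl α v) := by
  have h' : ⟪γ, α⟫_ℝ = 0 := real_inner_comm α γ ▸ h
  simp only [sRefl, inner_sub_left, real_inner_smul_left, h, h']
  match_scalars <;> ring

lemma SRefl_singleton (α v : V) : SRefl {α} v = sRefl α v := by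
  simp [SRefl, sRefl]

lemma SRefl_insert [DecidableEq V] {B : Finset V} {γ : V} (hγ : γ ∉ B)
    (horth : ∀ x ∈ B, ⟪x, γ⟫_ℝ = 0) (v : V) :
    SRefl (insert γ B) v = sRefl γ (SRefl B v) := by
  have hinner : ⟪SRefl B v, γ⟫_ℝ = ⟪v, γ⟫_ℝ := by
    rw [SRefl, inner_sub_left, sum_inner, Finset.sum_eq_zero, sub_zero]
    intro x hx
    rw [real_inner_smul_left, horth x hx, mul_zero]
  rw [sRefl, hinner, SRefl, SRefl, Finset.sum_insert hγ]
  abel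

lemma SRefl_mem_iff {B : Finset V} (horth : (B : Set V).Pairwise (⟪·, ·⟫_ℝ = 0)) {S : Set V}
    (hS : ∀ γ ∈ B, ∀ v, sRefl γ v ∈ S ↔ v ∈ S) (v : V) : SRefl B v ∈ S ↔ v ∈ S := by
  classical
  induction B using Finset.induction_on with
  | empty => simp [SRefl]
  | @insert γ B hγ ih =>
    rw [Finset.coe_insert, Set.pairwise_insert_of_notMem hγ] at horth
    rw [SRefl_insert hγ fun x hx => (horth.2 x hx).2, hS γ (B.mem_insert_self γ),
      ih horth.1 fun x hx => hS x (B.mem_insert_of_mem hx)]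

lemma Int.isUnit_or_isUnit_of_mul_pos_of_mul_lt_four {n m : ℤ} (hpos : 0 < n * m)
    (hlt : n * m < 4) : IsUnit n ∨ IsUnit m := by
  rw [Int.isUnit_iff_natAbs_eq, Int.isUnit_iff_natAbs_eq]
  have hprod : n.natAbs * m.natAbs < 4 := by
    rw [← Int.natAbs_mul]
    omega
  have hn : n.natAbs ≠ 0 := Int.natAbs_ne_zero.mpr (left_ne_zero_of_mul hpos.ne')
  have hm : m.natAbs ≠ 0 := Int.natAbs_ne_zero.mpr (right_ne_zero_of_mul hpos.ne')
  by_contra! h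
  have hn2 : 2 ≤ n.natAbs := by omega
  have hm2 : 2 ≤ m.natAbs := by omega
  nlinarith

namespace IsRootSystem

variable {R : Set V} (hR : IsRootSystem R) {α γ : V}
include hR

lemma neg_mem (hα : α ∈ R) : -α ∈ R :=
  sRefl_self α ▸ hR.refl_mem α hα α hα

lemma inner_mul_inner_lt (hα : α ∈ R) (hγ : γ ∈ R) (hne : γ ≠ α) (hneg : γ ≠ -α) :
    ⟪α, γ⟫_ℝ * ⟪α, γ⟫_ℝ < ⟪α, α⟫_ℝ * ⟪γ, γ⟫_ℝ := by
  refine (real_inner_mul_inner_self_le α γ).lt_of_ne fun heq => ?_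
  have hnorm : ‖⟪α, γ⟫_ℝ‖ = ‖α‖ * ‖γ‖ := by
    rw [Real.norm_eq_abs, ← abs_of_nonneg (by positivity : 0 ≤ ‖α‖ * ‖γ‖),
      ← sq_eq_sq_iff_abs_eq_abs, mul_pow, ← real_inner_self_eq_norm_sq,
      ← real_inner_self_eq_norm_sq, sq, heq]
  obtain ⟨r, -, rfl⟩ := (norm_inner_eq_norm_iff (hR.ne_zero α hα) (hR.ne_zero γ hγ)).mp hnorm
  rcases hR.reduced α hα r hγ with rfl | rfl
  · exact hne (one_smul ℝ α)
  · exact hneg (neg_one_smul ℝ α)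

lemma add_mem_or_sub_mem_of_isUnit (hα : α ∈ R) (hγ : γ ∈ R) {n : ℤ}
    (hn : 2 * ⟪γ, α⟫_ℝ / ⟪α, α⟫_ℝ = n) (hunit : IsUnit n) : α + γ ∈ R ∨ α - γ ∈ R := by
  have hmem : γ - (n : ℝ) • α ∈ R := hn ▸ hR.refl_mem α hα γ hγ
  rcases Int.isUnit_iff.mp hunit with rfl | rfl
  · right
    simpa using hR.neg_mem hmem
  · left
    simpa [add_comm] using hmem

/-- The product of the two Cartan integers lies strictly between `0` and `4`, so one of them
is `±1`. -/
lemma add_mem_or_sub_mem_of_inner_ne_zero (hα : α ∈ R) (hγ : γ ∈ R) (hne : γ ≠ α)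
    (hneg : γ ≠ -α) (horth : ⟪α, γ⟫_ℝ ≠ 0) : α + γ ∈ R ∨ α - γ ∈ R := by
  obtain ⟨n, hn⟩ := hR.integral α hα γ hγ
  obtain ⟨m, hm⟩ := hR.integral γ hγ α hα
  have hαα : 0 < ⟪α, α⟫_ℝ := real_inner_self_pos.mpr (hR.ne_zero α hα)
  have hγγ : 0 < ⟪γ, γ⟫_ℝ := real_inner_self_pos.mpr (hR.ne_zero γ hγ)
  have hprod : ((n * m : ℤ) : ℝ) = 4 * (⟪α, γ⟫_ℝ * ⟪α, γ⟫_ℝ) / (⟪α, α⟫_ℝ * ⟪γ, γ⟫_ℝ) := by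
    rw [Int.cast_mul, ← hn, ← hm, real_inner_comm γ α]
    field_simp
    ring
  have hpos : 0 < n * m := by
    have : (0 : ℝ) < ((n * m : ℤ) : ℝ) := by
      rw [hprod]
      exact div_pos (mul_pos four_pos (mul_self_pos.mpr horth)) (mul_pos hαα hγγ)
    exact_mod_cast this
  have hlt : n * m < 4 := by
    have : ((n * m : ℤ) : ℝ) < 4 := by
      rw [hprod, div_lt_iff₀ (by positivity)]
      linarith [hR.inner_mul_inner_lt hα hγ hne hneg]
    exact_mod_cast this
  rcases Int.isUnit_or_isUnit_of_mul_pos_of_mul_lt_four hpos hlt with hunit | hunit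
  · exact hR.add_mem_or_sub_mem_of_isUnit hα hγ hn hunit
  · rw [add_comm, ← neg_sub]
    exact (hR.add_mem_or_sub_mem_of_isUnit hγ hα hm hunit).imp_right hR.neg_mem

end IsRootSystem

lemma mem_RPlus_singleton {P : Set V} {α β : V} :
    β ∈ RPlus P {α} ↔ β ∈ P ∧ -sRefl α β ∈ P := by
  rw [← SRefl_singleton]
  rfl

namespace PropSharp

section

variable {R P A : Set V} (hsharp : PropSharp P A) (hP : IsPositiveSystem R P) {α γ : V}

include hsharp hP in
lemma disjoint_RPlus_singleton (hα : α ∈ A) (hγ : γ ∈ A) (hne : α ≠ γ) :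
    Disjoint (RPlus P {α}) (RPlus P {γ}) := by
  refine Set.disjoint_left.mpr fun β hβα hβγ => ?_
  rw [mem_RPlus_singleton] at hβα hβγ
  exact hP.not_both _ (hsharp α hα γ hγ hne β hβα.1 hβα.2) hβγ.2

include hsharp hP in
lemma neg_notMem (hαR : α ∈ R) (hα0 : α ≠ 0) (hα : α ∈ A) : -α ∉ A := by
  intro hnegα
  obtain ⟨β, hβP, hβα⟩ : ∃ β ∈ P, β = α ∨ β = -α := by
    rcases hP.mem_or_neg_mem α hαR with h | h
    exacts [⟨α, h, .inl rfl⟩, ⟨-α, h, .inr rfl⟩]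
  have hsβ : sRefl α β = -β := by
    rcases hβα with rfl | rfl
    · exact sRefl_self β
    · rw [sRefl_neg_right, sRefl_self]
  have hne : α ≠ -α := fun h => hα0 <| by
    rw [eq_neg_iff_add_eq_zero, ← two_smul ℝ] at h
    simpa using h
  have hβα : β ∈ RPlus P {α} := by
    rw [mem_RPlus_singleton, hsβ, neg_neg]
    exact ⟨hβP, hβP⟩
  have hβnegα : β ∈ RPlus P {-α} := by
    rw [mem_RPlus_singleton, sRefl_neg_left, hsβ, neg_neg]
    exact ⟨hβP, hβP⟩
  exact Set.disjoint_left.mp (hsharp.disjoint_RPlus_singleton hP hα hnegα hne) hβα hβnegα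

include hsharp hP in
lemma pairwise_inner_eq_zero (hR : IsRootSystem R) (hA : IsSOS R A) :
    A.Pairwise (⟪·, ·⟫_ℝ = 0) := by
  intro α hα γ hγ hne
  by_contra horth
  have hαR := hA.1 hα
  have hneg : γ ≠ -α := fun h => hsharp.neg_notMem hP hαR (hR.ne_zero α hαR) hα (h ▸ hγ)
  have hso := hA.2 hα hγ hne
  rcases hR.add_mem_or_sub_mem_of_inner_ne_zero hαR (hA.1 hγ) hne.symm hneg horth with h | h
  exacts [hso.1 h, hso.2 h]

include hsharp in
lemma sRefl_mem_RPlus_singleton_iff (hα : α ∈ A) (hγ : γ ∈ A) (hne : α ≠ γ)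
    (horth : ⟪α, γ⟫_ℝ = 0) {β : V} : sRefl γ β ∈ RPlus P {α} ↔ β ∈ RPlus P {α} := by
  suffices key : ∀ β, β ∈ RPlus P {α} → sRefl γ β ∈ RPlus P {α} from
    ⟨fun h => sRefl_involutive γ β ▸ key _ h, key β⟩
  intro β hβ
  rw [mem_RPlus_singleton] at hβ ⊢
  refine ⟨hsharp α hα γ hγ hne β hβ.1 hβ.2, ?_⟩
  -- `#` applied to the positive root `-s_α β`, which `s_α` sends back to `β`.
  have := hsharp α hα γ hγ hne _ hβ.2 <| by
    rw [sRefl_neg_right, neg_neg, sRefl_involutive]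
    exact hβ.1
  rwa [sRefl_neg_right, ← sRefl_comm horth] at this

end

section

variable {R P : Set V} {A : Finset V} (hsharp : PropSharp P A)
  (horth : (A : Set V).Pairwise (⟪·, ·⟫_ℝ = 0))
include hsharp horth

lemma SRefl_mem_RPlus_singleton_iff {B : Finset V} (hBA : B ⊆ A) {α : V} (hα : α ∈ A)
    (hαB : α ∉ B) {β : V} : SRefl B β ∈ RPlus P {α} ↔ β ∈ RPlus P {α} :=
  SRefl_mem_iff (horth.mono hBA) (fun γ hγ _ =>
    have hne : α ≠ γ := fun h => hαB (h ▸ hγ)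
    hsharp.sRefl_mem_RPlus_singleton_iff hα (hBA hγ) hne (horth hα (hBA hγ) hne)) β

lemma RPlus_singleton_subset [DecidableEq V] {α : V} (hα : α ∈ A) :
    RPlus P {α} ⊆ RPlus P A := by
  intro β hβ
  have hrest : SRefl (A.erase α) β ∈ RPlus P {α} :=
    (hsharp.SRefl_mem_RPlus_singleton_iff horth (A.erase_subset α) hα (A.notMem_erase α)).mpr hβ
  have hA : SRefl A β = sRefl α (SRefl (A.erase α) β) := by
    conv_lhs => rw [← Finset.insert_erase hα]
    exact SRefl_insert (A.notMem_erase α)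
      (fun x hx => horth (Finset.mem_of_mem_erase hx) hα (Finset.ne_of_mem_erase hx)) β
  exact ⟨hβ.1, hA ▸ (mem_RPlus_singleton.mp hrest).2⟩

lemma RPlus_subset_biUnion (hP : IsPositiveSystem R P) (hR : IsRootSystem R)
    (hAR : (A : Set V) ⊆ R) : RPlus P A ⊆ ⋃ α ∈ A, RPlus P {α} := by
  classical
  rintro β ⟨hβP, hAβ⟩
  by_contra hβ
  simp only [Set.mem_iUnion, not_exists] at hβ
  have hpos : SRefl A β ∈ P := by
    refine Finset.induction_on' (motive := fun B => SRefl B β ∈ P) A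
      (by simpa [SRefl] using hβP) fun γ B hγ hBA hγB hB => ?_
    have hBγ : ∀ x ∈ B, ⟪x, γ⟫_ℝ = 0 := fun x hx => horth (hBA hx) hγ fun h => hγB (h ▸ hx)
    rw [SRefl_insert hγB hBγ]
    refine (hP.mem_or_neg_mem _ (hR.refl_mem γ (hAR hγ) _ (hP.subset hB))).resolve_right
      fun hneg => hβ γ hγ ?_
    exact (hsharp.SRefl_mem_RPlus_singleton_iff horth hBA hγ hγB).mp
      (mem_RPlus_singleton.mpr ⟨hB, hneg⟩)
  exact hP.not_both _ hpos hAβ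

end

end PropSharp

/-- Under property `#`, `R⁺_A` is the disjoint union over `α ∈ A` of the sets
`R⁺_α = {β > 0 : s_α(β) < 0}`. -/
theorem statement8 (R P : Set V) (A : Finset V) (hR : IsRootSystem R)
    (hP : IsPositiveSystem R P) (hA : IsSOS R ↑A) (hsharp : PropSharp P ↑A) :
    RPlus P A = (⋃ α ∈ A, RPlus P {α}) ∧
      (↑A : Set V).Pairwise (fun α γ => Disjoint (RPlus P {α}) (RPlus P {γ})) := by
  classical
  have horth := hsharp.pairwise_inner_eq_zero hP hR hA
  refine ⟨(hsharp.RPlus_subset_biUnion horth hP hR hA.1).antisymm ?_,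
    fun α hα γ hγ hne => hsharp.disjoint_RPlus_singleton hP hα hγ hne⟩
  exact Set.iUnion₂_subset fun α hα => hsharp.RPlus_singleton_subset horth hα
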